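/- (Reduction to a smaller order statistic, Lemma C.3.) Fix Y ∈ ℤ, integers 1 ≤ r ≤ D, 1 ≤ d ≤ D, and (z_1,…,z_d) ∈ ℤ^d with counts (n1, n2, n3) relative to Y. If n1 ≥ r or n3 ≥ D − r + 1, then P(os_r(Z_{1:D}) = Y ∧ Z_1 = z_1, …, Z_d = z_d) = 0. If n1 < r and n3 < D − r + 1, then P(os_r(Z_{1:D}) = Y ∧ Z_1 = z_1, …, Z_d = z_d) · f(Y)^{n2} = P(os_{r−n1}(Z_{1:D−n1−n3}) = Y ∧ Z_1 = Y, …, Z_{n2} = Y) · ∏_{t=1}^{d} f(z_t); equivalently (when ∏_t f(z_t) > 0), P(os_r(Z_{1:D}) = Y | Z_1 = z_1, …, Z_d = z_d) = P(os_{r−n1}(Z_{1:D−n1−n3}) = Y | Z_1 = ⋯ = Z_{n2} = Y). -/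

import Mathlib

/-! Conditioning on the first `d` draws `z`, the event `os_r(Z_{1:D}) = Y` becomes an event on the
remaining `D - d` draws, and the product measure factors as `∏ f(z_t)` times its probability. That
event only sees how many prefix entries are `< Y` and `≤ Y`, namely `n1` and `n1 + n2`. It is
therefore empty in the degenerate cases, and otherwise unchanged when `z` is replaced by `n2`
copies of `Y` and `r` by `r - n1`; this replacement costs the factor `f(Y)^{n2}`. -/

open MeasureTheory

/-- The measure on ℤ with mass function `f`. -/
noncomputable def parentMeasure (f : ℤ → ℝ) : Measure ℤ :=
  Measure.count.withDensity fun z => ENNReal.ofReal (f z)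

/-- `P f D S` is the probability of the event `S` under the `D`-fold product of the
measure on ℤ with pmf `f`, i.e. the law of `D` i.i.d. draws `Z = (Z_1, …, Z_D)` from `f`. -/
noncomputable def P (f : ℤ → ℝ) (D : ℕ) (S : Set (Fin D → ℤ)) : ℝ :=
  (Measure.pi (fun _ : Fin D => parentMeasure f) S).toReal

/-- The CDF of `f`: `F(y) = ∑_{t ≤ y} f(t)`. -/
noncomputable def Fcdf (f : ℤ → ℝ) (y : ℤ) : ℝ := ∑' z : {t : ℤ // t ≤ y}, f z.1

/-- The number of entries of `z` that are `≤ y`. -/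
def countLe {n : ℕ} (z : Fin n → ℤ) (y : ℤ) : ℕ :=
  (Finset.univ.filter fun i => z i ≤ y).card

/-- `osEq r z Y` says that the `r`-th smallest entry of `z` (counting multiplicity)
equals `Y`: the `r`-th order statistic is `≤ Y` but not `≤ Y - 1`. -/
def osEq {n : ℕ} (r : ℕ) (z : Fin n → ℤ) (Y : ℤ) : Prop :=
  r ≤ countLe z Y ∧ countLe z (Y - 1) < r

/-- The order-statistic CDF `F^{(a,m)}(y) = ∑_{t=a}^{m} (m choose t) F(y)^t (1−F(y))^{m−t}`. -/
noncomputable def osCDF (f : ℤ → ℝ) (a m : ℕ) (y : ℤ) : ℝ :=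
  ∑ t ∈ Finset.Icc a m, (m.choose t : ℝ) * Fcdf f y ^ t * (1 - Fcdf f y) ^ (m - t)

theorem MeasureTheory.Measure.pi_setOf_castAdd_mem_and_natAdd_mem {α : Type*} [MeasurableSpace α]
    (μ : Measure α) [SigmaFinite μ] {d m : ℕ} (s : Set (Fin d → α))
    (Q : Set (Fin m → α)) :
    Measure.pi (fun _ : Fin (d + m) => μ)
        {ω | (fun i => ω (Fin.castAdd m i)) ∈ s ∧ (fun j => ω (Fin.natAdd d j)) ∈ Q} =
      Measure.pi (fun _ => μ) s * Measure.pi (fun _ => μ) Q := by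
  let e := (MeasurableEquiv.sumPiEquivProdPi fun _ : Fin d ⊕ Fin m => α).symm.trans
    (MeasurableEquiv.piCongrLeft (fun _ => α) finSumFinEquiv)
  have he : MeasurePreserving e ((Measure.pi fun _ => μ).prod (Measure.pi fun _ => μ))
      (Measure.pi fun _ : Fin (d + m) => μ) :=
    (measurePreserving_piCongrLeft (fun _ : Fin (d + m) => μ) finSumFinEquiv).comp
      (measurePreserving_sumPiEquivProdPi_symm fun _ : Fin d ⊕ Fin m => μ)
  have hset : {ω : Fin (d + m) → α | (fun i => ω (Fin.castAdd m i)) ∈ s ∧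
      (fun j => ω (Fin.natAdd d j)) ∈ Q} = e.symm ⁻¹' s ×ˢ Q := rfl
  rw [hset, he.symm.measure_preimage_equiv, Measure.prod_prod]

instance (f : ℤ → ℝ) : SigmaFinite (parentMeasure f) := by
  unfold parentMeasure; infer_instance

theorem parentMeasure_singleton (f : ℤ → ℝ) (a : ℤ) :
    parentMeasure f {a} = ENNReal.ofReal (f a) := by
  rw [parentMeasure, withDensity_apply _ (measurableSet_singleton a), lintegral_singleton,
    Measure.count_singleton, mul_one]

theorem P_setOf_castAdd_eq_and_natAdd_mem (f : ℤ → ℝ) (hf0 : ∀ z, 0 ≤ f z) {d m : ℕ}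
    (x : Fin d → ℤ) (Q : Set (Fin m → ℤ)) :
    P f (d + m)
        {ω | (∀ t, ω (Fin.castAdd m t) = x t) ∧ (fun j => ω (Fin.natAdd d j)) ∈ Q} =
      (∏ t, f (x t)) * P f m Q := by
  simp_rw [← funext_iff (f := fun t => _), ← Set.mem_singleton_iff (b := x)]
  rw [P, P, Measure.pi_setOf_castAdd_mem_and_natAdd_mem, ← Set.univ_pi_singleton, Measure.pi_pi,
    ENNReal.toReal_mul, ENNReal.toReal_prod]
  simp_rw [parentMeasure_singleton, ENNReal.toReal_ofReal (hf0 _)]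

theorem countLe_append {d m : ℕ} (x : Fin d → ℤ) (w : Fin m → ℤ) (y : ℤ) :
    countLe (Fin.append x w) y = countLe x y + countLe w y := by
  simp only [countLe, Finset.card_filter, Fin.sum_univ_add, Fin.append_left, Fin.append_right]

theorem countLe_le {m : ℕ} (w : Fin m → ℤ) (y : ℤ) : countLe w y ≤ m :=
  (Finset.card_le_univ _).trans_eq (Fintype.card_fin m)

theorem countLe_sub_one {d : ℕ} (z : Fin d → ℤ) (Y : ℤ) :
    countLe z (Y - 1) = (Finset.univ.filter fun t => z t < Y).card := by
  simp only [countLe, Int.le_sub_one_iff]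

theorem countLe_eq_card_lt_add_card_eq {d : ℕ} (z : Fin d → ℤ) (Y : ℤ) :
    countLe z Y = (Finset.univ.filter fun t => z t < Y).card +
      (Finset.univ.filter fun t => z t = Y).card := by
  simp only [countLe, Finset.card_filter]
  rw [← Finset.sum_add_distrib]
  exact Finset.sum_congr rfl fun t _ => by split_ifs <;> omega

theorem countLe_add_card_gt {d : ℕ} (z : Fin d → ℤ) (Y : ℤ) :
    countLe z Y + (Finset.univ.filter fun t => Y < z t).card = d := by
  simp_rw [countLe, ← not_le]
  rw [Finset.card_filter_add_card_filter_not, Finset.card_univ, Fintype.card_fin]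

def osEqTail {d m : ℕ} (x : Fin d → ℤ) (r : ℕ) (Y : ℤ) : Set (Fin m → ℤ) :=
  {w | osEq r (Fin.append x w) Y}

theorem osEqTail_eq_of_countLe {d d' m : ℕ} {x : Fin d → ℤ} {x' : Fin d' → ℤ}
    {Y : ℤ} {k : ℕ}
    (hle : countLe x Y = countLe x' Y + k) (hlt : countLe x (Y - 1) = countLe x' (Y - 1) + k)
    (r : ℕ) : (osEqTail x r Y : Set (Fin m → ℤ)) = osEqTail x' (r - k) Y := by
  ext w
  simp only [osEqTail, Set.mem_ofPred_eq, osEq, countLe_append, hle, hlt]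
  omega

theorem osEqTail_eq_empty {d m : ℕ} {x : Fin d → ℤ} {r : ℕ} {Y : ℤ}
    (h : r ≤ countLe x (Y - 1) ∨ countLe x Y + m < r) :
    (osEqTail x r Y : Set (Fin m → ℤ)) = ∅ := by
  refine Set.eq_empty_of_forall_notMem fun w ⟨hle, hlt⟩ => ?_
  rw [countLe_append] at hle hlt
  have := countLe_le w Y
  omega

theorem P_osEq_and_prefix (f : ℤ → ℝ) (hf0 : ∀ z, 0 ≤ f z) {d m : ℕ} (x : Fin d → ℤ)
    (r : ℕ) (Y : ℤ) :
    P f (d + m) {ω | osEq r ω Y ∧ ∀ t, ω (Fin.castAdd m t) = x t} =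
      (∏ t, f (x t)) * P f m (osEqTail x r Y) := by
  rw [← P_setOf_castAdd_eq_and_natAdd_mem f hf0]
  congr 1
  ext ω
  refine and_comm.trans (and_congr_right fun hx => ?_)
  rw [← funext_iff] at hx
  rw [osEqTail, Set.mem_ofPred_eq, ← hx, Fin.append_castAdd_natAdd]

theorem reduction_to_smaller_order_statistic_general
    (f : ℤ → ℝ) (hf0 : ∀ z, 0 ≤ f z)
    (Y : ℤ) (D r d : ℕ) (hdD : d ≤ D)
    (z : Fin d → ℤ) :
    ((r ≤ (Finset.univ.filter fun t => z t < Y).card ∨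
        D - r + 1 ≤ (Finset.univ.filter fun t => Y < z t).card) →
      P f D {ω | osEq r ω Y ∧ ∀ t : Fin d, ω (Fin.castLE hdD t) = z t} = 0) ∧
    (((Finset.univ.filter fun t => z t < Y).card < r ∧
        (Finset.univ.filter fun t => Y < z t).card < D - r + 1) →
      P f D {ω | osEq r ω Y ∧ ∀ t : Fin d, ω (Fin.castLE hdD t) = z t} *
          f Y ^ (Finset.univ.filter fun t => z t = Y).card
        = P f (D - (Finset.univ.filter fun t => z t < Y).card -
                (Finset.univ.filter fun t => Y < z t).card)
            {ω | osEq (r - (Finset.univ.filter fun t => z t < Y).card) ω Y ∧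
              ∀ t, t.1 < (Finset.univ.filter fun t => z t = Y).card → ω t = Y} *
          ∏ t, f (z t)) := by
  obtain ⟨m, rfl⟩ := Nat.exists_eq_add_of_le hdD
  set n1 := (Finset.univ.filter fun t => z t < Y).card
  set n2 := (Finset.univ.filter fun t => z t = Y).card
  set n3 := (Finset.univ.filter fun t => Y < z t).card
  have hle : countLe z Y = n1 + n2 := countLe_eq_card_lt_add_card_eq z Y
  have hlt : countLe z (Y - 1) = n1 := countLe_sub_one z Y
  have hd : countLe z Y + n3 = d := countLe_add_card_gt z Y
  have hP : P f (d + m) {ω | osEq r ω Y ∧ ∀ t : Fin d, ω (Fin.castLE hdD t) = z t} =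
      (∏ t, f (z t)) * P f m (osEqTail z r Y) := P_osEq_and_prefix f hf0 z r Y
  refine ⟨fun h => ?_, fun _ => ?_⟩
  · rw [hP, osEqTail_eq_empty (by omega), P, measure_empty, ENNReal.toReal_zero, mul_zero]
  · have hprefix (ω : Fin (n2 + m) → ℤ) :
        (∀ t : Fin (n2 + m), t.1 < n2 → ω t = Y) ↔
          ∀ t : Fin n2, ω (Fin.castAdd m t) = Y :=
      ⟨fun h t => h _ t.2, fun h t ht => h ⟨t, ht⟩⟩
    have hconst : countLe (fun _ : Fin n2 => Y) Y = n2 ∧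
        countLe (fun _ : Fin n2 => Y) (Y - 1) = 0 := by
      simp [countLe]
    rw [show d + m - n1 - n3 = n2 + m by omega]
    simp_rw [hprefix]
    rw [hP, P_osEq_and_prefix f hf0 (fun _ => Y),
      osEqTail_eq_of_countLe (x' := fun _ : Fin n2 => Y) (k := n1) (by omega) (by omega),
      Finset.prod_const, Finset.card_univ, Fintype.card_fin]
    ring

/-- **Lemma C.3** (reduction to a smaller order statistic): with counts
`n1 = #{t : z_t < Y}`, `n2 = #{t : z_t = Y}`, `n3 = #{t : z_t > Y}` of the prefix `z ∈ ℤ^d`,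
if `n1 ≥ r` or `n3 ≥ D − r + 1` the joint probability of the prefix with
`{os_r(Z_{1:D}) = Y}` vanishes; otherwise it reduces (after reweighting by `f(Y)^{n2}` and
`∏_t f(z_t)`) to the probability for order `D − n1 − n3` and rank `r − n1` with a prefix of
`n2` entries all equal to `Y`. -/
theorem reduction_to_smaller_order_statistic
    (f : ℤ → ℝ) (hf0 : ∀ z, 0 ≤ f z) (hf1 : HasSum f 1)
    (Y : ℤ) (D r d : ℕ) (hr1 : 1 ≤ r) (hrD : r ≤ D) (hd1 : 1 ≤ d) (hdD : d ≤ D)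
    (z : Fin d → ℤ) :
    ((r ≤ (Finset.univ.filter fun t => z t < Y).card ∨
        D - r + 1 ≤ (Finset.univ.filter fun t => Y < z t).card) →
      P f D {ω | osEq r ω Y ∧ ∀ t : Fin d, ω (Fin.castLE hdD t) = z t} = 0) ∧
    (((Finset.univ.filter fun t => z t < Y).card < r ∧
        (Finset.univ.filter fun t => Y < z t).card < D - r + 1) →
      P f D {ω | osEq r ω Y ∧ ∀ t : Fin d, ω (Fin.castLE hdD t) = z t} *
          f Y ^ (Finset.univ.filter fun t => z t = Y).card
        = P f (D - (Finset.univ.filter fun t => z t < Y).card -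
                (Finset.univ.filter fun t => Y < z t).card)
            {ω | osEq (r - (Finset.univ.filter fun t => z t < Y).card) ω Y ∧
              ∀ t, t.1 < (Finset.univ.filter fun t => z t = Y).card → ω t = Y} *
          ∏ t, f (z t)) :=
  reduction_to_smaller_order_statistic_general f hf0 Y D r d hdD z
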